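/- Let B be a finite-dimensional vector space over a field K of characteristic zero regarded as an abelian Lie algebra, and w : B × B → B* a cyclic skew-symmetric bilinear map, with T*_w B the T*-extension of B by w. Then the derived algebra of T*_w B equals span{w(b,b') : b,b' ∈ B} and Z(T*_w B) = rad w ⊕ B*. Consequently T*_w B is 2-step nilpotent if and only if w ≠ 0, and the following are equivalent: (a) (T*_w B, q_B) is reduced; (b) w is nondegenerate (rad w = 0); (c) B* = span{w(b,b') : b,b' ∈ B}. -/
import Mathlib


open Module

variable {K B : Type*}

/-- The T*-extension bracket of an abelian Lie algebra: `[b+β, b'+β'] = w(b,b')`. -/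
def abelBr [Field K] [AddCommGroup B] [Module K B]
    (w : B →ₗ[K] B →ₗ[K] Module.Dual K B)
    (X Y : B × Module.Dual K B) : B × Module.Dual K B :=
  ((0 : B), w X.1 Y.1)

/-- For `B` an abelian Lie algebra (a vector space) and `w` a cyclic skew-symmetric
bilinear map, the derived algebra of `T*_w B` is `span{w(b,b')}`, the centre is
`rad w ⊕ B*`, `T*_w B` is 2-step nilpotent iff `w ≠ 0`, and reducedness, nondegeneracy
of `w`, and `B* = span{w(b,b')}` are equivalent. -/
theorem stmt11 [Field K] [CharZero K] [AddCommGroup B] [Module K B] [FiniteDimensional K B]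
    (w : B →ₗ[K] B →ₗ[K] Module.Dual K B)
    (hcyc : ∀ a b c : B, w a b c = w c a b ∧ w c a b = w b c a)
    (hskew : ∀ a b : B, w a b = - w b a) :
    (Submodule.span K {z : B × Module.Dual K B | ∃ X Y, z = abelBr w X Y} =
      Submodule.prod (⊥ : Submodule K B)
        (Submodule.span K {β : Module.Dual K B | ∃ b b' : B, β = w b b'})) ∧
    ({X : B × Module.Dual K B | ∀ Y, abelBr w X Y = 0} =
      {X : B × Module.Dual K B | ∀ b' : B, w X.1 b' = 0}) ∧
    (((∀ X Y Z : B × Module.Dual K B, abelBr w X (abelBr w Y Z) = 0) ∧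
      (∃ X Y : B × Module.Dual K B, abelBr w X Y ≠ 0)) ↔ w ≠ 0) ∧
    ((∀ X : B × Module.Dual K B, (∀ Y, abelBr w X Y = 0) →
        X ∈ Submodule.span K {z : B × Module.Dual K B | ∃ X' Y', z = abelBr w X' Y'})
      ↔ (∀ b : B, (∀ b' : B, w b b' = 0) → b = 0)) ∧
    ((∀ b : B, (∀ b' : B, w b b' = 0) → b = 0)
      ↔ Submodule.span K {β : Module.Dual K B | ∃ b b' : B, β = w b b'} = ⊤) := by
  set S : Set (Module.Dual K B) := {β : Module.Dual K B | ∃ b b' : B, β = w b b'} with hS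
  -- Part 1
  have hset : {z : B × Module.Dual K B | ∃ X Y, z = abelBr w X Y}
      = (LinearMap.inr K B (Module.Dual K B)) '' S := by
    ext z
    constructor
    · rintro ⟨X, Y, rfl⟩
      exact ⟨w X.1 Y.1, ⟨X.1, Y.1, rfl⟩, rfl⟩
    · rintro ⟨β, ⟨b, b', rfl⟩, rfl⟩
      exact ⟨(b, 0), (b', 0), rfl⟩
  have h1 : Submodule.span K {z : B × Module.Dual K B | ∃ X Y, z = abelBr w X Y} =
      Submodule.prod (⊥ : Submodule K B) (Submodule.span K S) := by
    rw [hset, ← Submodule.map_span, Submodule.map_inr]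
  -- Part 5
  have h5 : (∀ b : B, (∀ b' : B, w b b' = 0) → b = 0) ↔ Submodule.span K S = ⊤ := by
    constructor
    · intro hnd
      by_contra hne
      obtain ⟨f, hf0, hf⟩ := Submodule.exists_dual_map_eq_bot_of_lt_top
        (lt_top_iff_ne_top.mpr hne) inferInstance
      obtain ⟨b, rfl⟩ := (Module.evalEquiv K B).surjective f
      have hb0 : b ≠ 0 := by
        rintro rfl
        exact hf0 (by simp)
      apply hb0
      apply hnd
      intro b'
      ext b''
      have key : ∀ s ∈ Submodule.span K S, Module.evalEquiv K B b s = 0 := by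
        intro s hs
        have : Module.evalEquiv K B b s ∈ Submodule.map (Module.evalEquiv K B b)
            (Submodule.span K S) := ⟨s, hs, rfl⟩
        rw [hf] at this
        simpa using this
      have h2 : w b' b'' b = 0 := by
        have := key (w b' b'') (Submodule.subset_span ⟨b', b'', rfl⟩)
        simpa [Module.Dual.eval_apply] using this
      have := (hcyc b b' b'').1.trans (hcyc b b' b'').2
      rw [this]
      simpa using h2
    · intro htop b hb
      rw [← Module.forall_dual_apply_eq_zero_iff K b]
      intro φ
      have hφ : φ ∈ Submodule.span K S := htop ▸ Submodule.mem_top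
      induction hφ using Submodule.span_induction with
      | mem s hs =>
        obtain ⟨b', b'', rfl⟩ := hs
        have := (hcyc b b' b'').1.trans (hcyc b b' b'').2
        rw [← this, hb b']
        simp
      | zero => simp
      | add x y _ _ hx hy => simp [hx, hy]
      | smul c x _ hx => simp [hx]
  -- Part 2
  have h2 : ({X : B × Module.Dual K B | ∀ Y, abelBr w X Y = 0} =
      {X : B × Module.Dual K B | ∀ b' : B, w X.1 b' = 0}) := by
    ext X
    simp only [Set.mem_setOf_eq, abelBr, Prod.ext_iff]
    constructor
    · intro h b'
      exact (h (b', 0)).2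
    · intro h Y
      exact ⟨rfl, h Y.1⟩
  refine ⟨h1, h2, ?_, ?_, h5⟩
  · constructor
    · rintro ⟨-, X, Y, hXY⟩ hw
      exact hXY (by simp [abelBr, hw])
    · intro hw
      refine ⟨fun X Y Z => by simp [abelBr], ?_⟩
      by_contra h
      push_neg at h
      apply hw
      ext b b' y
      have h0 : w b b' = 0 := by simpa [abelBr, Prod.ext_iff] using h (b, 0) (b', 0)
      simp [h0]
  · constructor
    · intro hred b hb
      have hX : ∀ Y, abelBr w (b, (0 : Module.Dual K B)) Y = 0 := by
        intro Y; simp [abelBr, hb Y.1]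
      have := hred (b, 0) hX
      rw [h1] at this
      simpa using this.1
    · intro hnd X hX
      rw [h1]
      have hx1 : X.1 = 0 := by
        apply hnd
        intro b'
        have := hX (b', 0)
        simpa [abelBr, Prod.ext_iff] using this
      exact ⟨by simp [hx1], (h5.mp hnd) ▸ Submodule.mem_top⟩
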